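/- (Theorem 4.4, second bound) Suppose E(X^h) − E(Y) ≤ (λ_k − λ_{k+1})/(2k). Then d(Y, X^h) ≤ √( 2λ_{k+1} · k(E(X^h) − E(Y)) / (λ_k − λ_{k+1}) ). -/

import Mathlib

/-!
Write `Y = XC`. Since `X` and `Y` are `B`-orthonormal, `C` has orthonormal columns, so the squared
row norms `sᵢ` of `C` lie in `[0, 1]` and sum to `k`. Both energies are then averages of the `λᵢ`,
and `k (E(Xʰ) - E(Y)) = ∑ᵢ₌₁ᵏ λᵢ (1 - sᵢ) - ∑ᵢ₌ₖ₊₁ⁿ λᵢ sᵢ ≥ (λ_k - λ_{k+1}) t`, where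
`t = ∑ᵢ₌ₖ₊₁ⁿ sᵢ = ‖Cˡ‖_F²`; the hypothesis forces `t ≤ 1/2`. Hence `‖Cʰw‖² ≥ (1 - t) ‖w‖²`, so
every `α` with `‖α‖ ≤ 1` is `Cʰw` for some `w` with `‖w‖² ≤ 2`, and the residual
`Xʰα - Yw = -XˡCˡw` has squared `A`-norm `∑ᵢ₌ₖ₊₁ⁿ λᵢ (Cˡw)ᵢ² ≤ λ_{k+1} t ‖w‖² ≤ 2 λ_{k+1} t`.
-/

open Matrix

noncomputable def energy {n k : Type*} [Fintype n] [Fintype k]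
    (A B : Matrix n n ℝ) (Z : Matrix n k ℝ) : ℝ :=
  (Zᵀ * A * Z).trace / (Zᵀ * B * Z).trace

namespace Matrix

variable {ι κ m n : Type*}

theorem transpose_mul_mul_mul_mul [Fintype m] [Fintype ι] (X : Matrix m ι ℝ) (C : Matrix ι n ℝ)
    (M : Matrix m m ℝ) : (X * C)ᵀ * M * (X * C) = Cᵀ * (Xᵀ * M * X) * C := by
  simp only [transpose_mul, Matrix.mul_assoc]

theorem transpose_mul_self_eq_one_of_mul [Fintype m] [Fintype ι] [DecidableEq ι] [DecidableEq n]
    {B : Matrix m m ℝ} {X : Matrix m ι ℝ} {C : Matrix ι n ℝ} (hX : Xᵀ * B * X = 1)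
    (hXC : (X * C)ᵀ * B * (X * C) = 1) : Cᵀ * C = 1 := by
  rwa [transpose_mul_mul_mul_mul, hX, Matrix.mul_one] at hXC

variable [Fintype n]

theorem sq_mulVec_apply_le (C : Matrix ι n ℝ) (v : n → ℝ) (i : ι) :
    (C *ᵥ v) i ^ 2 ≤ (∑ j, C i j ^ 2) * ∑ j, v j ^ 2 :=
  Finset.sum_mul_sq_le_sq_mul_sq _ _ _

theorem sum_sq_mulVec_inr_le [Fintype κ] (C : Matrix (ι ⊕ κ) n ℝ) (v : n → ℝ) :
    ∑ b, (C *ᵥ v) (Sum.inr b) ^ 2 ≤ (∑ b, ∑ j, C (Sum.inr b) j ^ 2) * ∑ j, v j ^ 2 := by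
  rw [Finset.sum_mul]
  exact Finset.sum_le_sum fun b _ => sq_mulVec_apply_le C v (Sum.inr b)

theorem sum_mul_sq_mulVec_inr_le [Fintype κ] (C : Matrix (ι ⊕ κ) n ℝ) (v : n → ℝ)
    {lam : κ → ℝ} {l : ℝ} (hl : ∀ b, lam b ≤ l) (hl0 : 0 ≤ l) :
    ∑ b, lam b * (C *ᵥ v) (Sum.inr b) ^ 2 ≤
      l * ((∑ b, ∑ j, C (Sum.inr b) j ^ 2) * ∑ j, v j ^ 2) :=
  calc ∑ b, lam b * (C *ᵥ v) (Sum.inr b) ^ 2 ≤ ∑ b, l * (C *ᵥ v) (Sum.inr b) ^ 2 :=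
        Finset.sum_le_sum fun b _ => mul_le_mul_of_nonneg_right (hl b) (sq_nonneg _)
    _ = l * ∑ b, (C *ᵥ v) (Sum.inr b) ^ 2 := (Finset.mul_sum ..).symm
    _ ≤ _ := mul_le_mul_of_nonneg_left (sum_sq_mulVec_inr_le C v) hl0

theorem submatrix_inl_mulVec [Fintype ι] [Fintype κ] (X : Matrix m (ι ⊕ κ) ℝ) (α : ι → ℝ) :
    X.submatrix id Sum.inl *ᵥ α = X *ᵥ Sum.elim α 0 := by
  ext
  simp [mulVec, dotProduct, Fintype.sum_sum_type]

variable [Fintype ι] [Fintype κ]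

theorem trace_transpose_mul_diagonal_mul [DecidableEq ι] (C : Matrix ι n ℝ) (lam : ι → ℝ) :
    (Cᵀ * diagonal lam * C).trace = ∑ i, lam i * ∑ j, C i j ^ 2 := by
  simp only [trace, diag, mul_apply, transpose_apply, diagonal_apply, mul_ite, mul_zero,
    Finset.sum_ite_eq', Finset.mem_univ, if_true, Finset.mul_sum]
  rw [Finset.sum_comm]
  exact Finset.sum_congr rfl fun i _ => Finset.sum_congr rfl fun j _ => by ring

theorem dotProduct_mulVec_mulVec_of_transpose_mul_mul [Fintype m] [DecidableEq ι]
    {A : Matrix m m ℝ} {X : Matrix m ι ℝ} {lam : ι → ℝ} (hXA : Xᵀ * A * X = diagonal lam)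
    (u : ι → ℝ) : (X *ᵥ u) ⬝ᵥ (A *ᵥ (X *ᵥ u)) = ∑ i, lam i * u i ^ 2 := by
  have h : (X *ᵥ u) ⬝ᵥ (A *ᵥ (X *ᵥ u)) = u ⬝ᵥ ((Xᵀ * A * X) *ᵥ u) := by
    rw [← mulVec_mulVec, ← mulVec_mulVec, dotProduct_mulVec u Xᵀ, vecMul_transpose]
  rw [h, hXA]
  simp only [dotProduct, mulVec_diagonal]
  exact Finset.sum_congr rfl fun i _ => by ring

theorem dotProduct_mulVec_submatrix_inl_sub_mul_mulVec [Fintype m] [DecidableEq ι]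
    [DecidableEq κ] {A : Matrix m m ℝ} {X : Matrix m (ι ⊕ κ) ℝ} {lam : ι ⊕ κ → ℝ}
    (hXA : Xᵀ * A * X = diagonal lam) {C : Matrix (ι ⊕ κ) n ℝ} {α : ι → ℝ} {w : n → ℝ}
    (hw : ∀ a, (C *ᵥ w) (Sum.inl a) = α a) :
    (X.submatrix id Sum.inl *ᵥ α - (X * C) *ᵥ w) ⬝ᵥ
        A *ᵥ (X.submatrix id Sum.inl *ᵥ α - (X * C) *ᵥ w) =
      ∑ b, lam (Sum.inr b) * (C *ᵥ w) (Sum.inr b) ^ 2 := by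
  have hu : X.submatrix id Sum.inl *ᵥ α - (X * C) *ᵥ w = X *ᵥ (Sum.elim α 0 - C *ᵥ w) := by
    rw [submatrix_inl_mulVec, ← mulVec_mulVec, ← mulVec_sub]
  rw [hu, dotProduct_mulVec_mulVec_of_transpose_mul_mul hXA, Fintype.sum_sum_type]
  simp [hw]

variable [DecidableEq n]

section OrthonormalColumns

variable {C : Matrix ι n ℝ}

theorem sum_sq_mulVec_of_transpose_mul_self (hC : Cᵀ * C = 1) (v : n → ℝ) :
    ∑ i, (C *ᵥ v) i ^ 2 = ∑ j, v j ^ 2 := by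
  have h : (C *ᵥ v) ⬝ᵥ (C *ᵥ v) = v ⬝ᵥ v := by
    rw [dotProduct_mulVec, ← mulVec_transpose, mulVec_mulVec, hC, one_mulVec]
  simpa only [dotProduct, sq] using h

theorem sum_sq_row_le_one_of_transpose_mul_self (hC : Cᵀ * C = 1) (i : ι) :
    ∑ j, C i j ^ 2 ≤ 1 := by
  set r : n → ℝ := fun j => C i j
  have hrow : (C *ᵥ r) i = ∑ j, C i j ^ 2 := by simp only [r, mulVec, dotProduct, sq]
  have hsq : (∑ j, C i j ^ 2) ^ 2 ≤ ∑ j, C i j ^ 2 :=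
    calc (∑ j, C i j ^ 2) ^ 2 = (C *ᵥ r) i ^ 2 := by rw [hrow]
      _ ≤ ∑ l, (C *ᵥ r) l ^ 2 :=
        Finset.single_le_sum (fun l _ => sq_nonneg ((C *ᵥ r) l)) (Finset.mem_univ i)
      _ = ∑ j, C i j ^ 2 := sum_sq_mulVec_of_transpose_mul_self hC r
  nlinarith [Finset.sum_nonneg fun j (_ : j ∈ Finset.univ) => sq_nonneg (C i j)]

theorem sum_sum_sq_of_transpose_mul_self (hC : Cᵀ * C = 1) :
    ∑ i, ∑ j, C i j ^ 2 = Fintype.card n := by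
  have h := congrArg trace hC
  rw [trace_one] at h
  simp only [trace, diag, mul_apply, transpose_apply, ← sq] at h
  rw [Finset.sum_comm, h]

end OrthonormalColumns

theorem sub_mul_le_sum_sq_mulVec_inl {C : Matrix (ι ⊕ κ) n ℝ} (hC : Cᵀ * C = 1) (v : n → ℝ) :
    (1 - ∑ b, ∑ j, C (Sum.inr b) j ^ 2) * ∑ j, v j ^ 2 ≤ ∑ a, (C *ᵥ v) (Sum.inl a) ^ 2 := by
  have h := sum_sq_mulVec_of_transpose_mul_self hC v
  rw [Fintype.sum_sum_type] at h
  linarith [sum_sq_mulVec_inr_le C v]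

theorem exists_mulVec_inl_eq [DecidableEq ι] {C : Matrix (ι ⊕ κ) ι ℝ} (hC : Cᵀ * C = 1)
    (ht : ∑ b, ∑ j, C (Sum.inr b) j ^ 2 < 1) (α : ι → ℝ) :
    ∃ w, (∀ a, (C *ᵥ w) (Sum.inl a) = α a) ∧
      (1 - ∑ b, ∑ j, C (Sum.inr b) j ^ 2) * ∑ j, w j ^ 2 ≤ ∑ a, α a ^ 2 := by
  set Ch := C.submatrix Sum.inl id
  have hCh : ∀ v, Ch *ᵥ v = fun a => (C *ᵥ v) (Sum.inl a) := fun v => rfl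
  have hinj : Function.Injective Ch.mulVecLin := by
    refine (injective_iff_map_eq_zero _).2 fun v hv => ?_
    have h := sub_mul_le_sum_sq_mulVec_inl hC v
    simp only [mulVecLin_apply, hCh, funext_iff, Pi.zero_apply] at hv
    simp only [hv, ne_eq, OfNat.ofNat_ne_zero, not_false_eq_true, zero_pow,
      Finset.sum_const_zero] at h
    have hv0 : ∑ j, v j ^ 2 = 0 :=
      le_antisymm (nonpos_of_mul_nonpos_right h (sub_pos.2 ht))
        (Finset.sum_nonneg fun j _ => sq_nonneg _)
    rw [Finset.sum_eq_zero_iff_of_nonneg fun j _ => sq_nonneg (v j)] at hv0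
    exact funext fun j => pow_eq_zero_iff two_ne_zero |>.1 (hv0 j (Finset.mem_univ j))
  obtain ⟨w, hw⟩ := mulVec_surjective_iff_isUnit.2 (mulVec_injective_iff_isUnit.1 hinj) α
  refine ⟨w, fun a => congrFun hw a, ?_⟩
  rw [← hw]
  exact sub_mul_le_sum_sq_mulVec_inl hC w

end Matrix

theorem sub_mul_sum_inr_le {ι κ : Type*} [Fintype ι] [Fintype κ] {lam s : ι ⊕ κ → ℝ} {L l : ℝ}
    (hs1 : ∀ a, s (Sum.inl a) ≤ 1) (hs0 : ∀ b, 0 ≤ s (Sum.inr b))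
    (hsum : ∑ i, s i = Fintype.card ι)
    (hL : ∀ a, L ≤ lam (Sum.inl a)) (hl : ∀ b, lam (Sum.inr b) ≤ l) :
    (L - l) * ∑ b, s (Sum.inr b) ≤ ∑ a, lam (Sum.inl a) - ∑ i, lam i * s i := by
  have hdefect : ∑ a, (1 - s (Sum.inl a)) = ∑ b, s (Sum.inr b) := by
    rw [Fintype.sum_sum_type] at hsum
    simp only [Finset.sum_sub_distrib, Finset.sum_const, Finset.card_univ, nsmul_eq_mul, mul_one]
    linarith
  have hhigh : L * ∑ b, s (Sum.inr b) ≤ ∑ a, lam (Sum.inl a) * (1 - s (Sum.inl a)) := by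
    rw [← hdefect, Finset.mul_sum]
    exact Finset.sum_le_sum fun a _ => mul_le_mul_of_nonneg_right (hL a) (sub_nonneg.2 (hs1 a))
  have hlow : ∑ b, lam (Sum.inr b) * s (Sum.inr b) ≤ l * ∑ b, s (Sum.inr b) := by
    rw [Finset.mul_sum]
    exact Finset.sum_le_sum fun b _ => mul_le_mul_of_nonneg_right (hl b) (hs0 b)
  have hsplit : ∑ a, lam (Sum.inl a) - ∑ i, lam i * s i =
      ∑ a, lam (Sum.inl a) * (1 - s (Sum.inl a)) - ∑ b, lam (Sum.inr b) * s (Sum.inr b) := by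
    simp only [Fintype.sum_sum_type, mul_sub, mul_one, Finset.sum_sub_distrib]
    ring
  linarith

section Energy

variable {ι m n : Type*} [Fintype m] [Fintype n] [DecidableEq n] [DecidableEq ι]
  {A B : Matrix m m ℝ} {X : Matrix m ι ℝ} {lam : ι → ℝ}

theorem energy_eq_trace_div_card {Z : Matrix m n ℝ} (hZ : Zᵀ * B * Z = 1) :
    energy A B Z = (Zᵀ * A * Z).trace / Fintype.card n := by
  rw [energy, hZ, trace_one]

theorem energy_mul [Fintype ι] (hXB : Xᵀ * B * X = 1) (hXA : Xᵀ * A * X = diagonal lam)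
    {C : Matrix ι n ℝ} (hC : Cᵀ * C = 1) :
    energy A B (X * C) = (∑ i, lam i * ∑ j, C i j ^ 2) / Fintype.card n := by
  rw [energy_eq_trace_div_card (by rw [transpose_mul_mul_mul_mul, hXB, Matrix.mul_one, hC]),
    transpose_mul_mul_mul_mul, hXA, trace_transpose_mul_diagonal_mul]

theorem energy_submatrix (hXB : Xᵀ * B * X = 1) (hXA : Xᵀ * A * X = diagonal lam)
    {e : n → ι} (he : Function.Injective e) :
    energy A B (X.submatrix id e) = (∑ a, lam (e a)) / Fintype.card n := by
  have hsub : ∀ M : Matrix m m ℝ,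
      (X.submatrix id e)ᵀ * M * X.submatrix id e = (Xᵀ * M * X).submatrix e e := fun _ => rfl
  rw [energy_eq_trace_div_card (by rw [hsub, hXB, submatrix_one _ he]), hsub, hXA,
    submatrix_diagonal _ _ he, trace_diagonal]
  rfl

end Energy

theorem sub_mul_sum_sq_inr_le_energy_sub {ι κ m : Type*} [Fintype ι] [Nonempty ι] [Fintype κ]
    [Fintype m] [DecidableEq ι] [DecidableEq κ] {A B : Matrix m m ℝ} {X : Matrix m (ι ⊕ κ) ℝ}
    {lam : ι ⊕ κ → ℝ} {C : Matrix (ι ⊕ κ) ι ℝ} {L l : ℝ} (hXB : Xᵀ * B * X = 1)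
    (hXA : Xᵀ * A * X = diagonal lam) (hC : Cᵀ * C = 1) (hL : ∀ a, L ≤ lam (Sum.inl a))
    (hl : ∀ b, lam (Sum.inr b) ≤ l) :
    (L - l) * ∑ b, ∑ j, C (Sum.inr b) j ^ 2 ≤
      Fintype.card ι * (energy A B (X.submatrix id Sum.inl) - energy A B (X * C)) := by
  rw [energy_submatrix hXB hXA Sum.inl_injective, energy_mul hXB hXA hC, ← sub_div,
    mul_div_cancel₀ _ (by positivity)]
  exact sub_mul_sum_inr_le (fun a => sum_sq_row_le_one_of_transpose_mul_self hC _)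
    (fun b => Finset.sum_nonneg fun j _ => sq_nonneg _) (sum_sum_sq_of_transpose_mul_self hC)
    hL hl

theorem stmt_15_general (k m : ℕ)
    (A B : Matrix (Fin (k+1) ⊕ Fin (m+1)) (Fin (k+1) ⊕ Fin (m+1)) ℝ)
    (lam : Fin (k+1) ⊕ Fin (m+1) → ℝ)
    (X : Matrix (Fin (k+1) ⊕ Fin (m+1)) (Fin (k+1) ⊕ Fin (m+1)) ℝ)
    (hXB : Xᵀ * B * X = 1)
    (hXA : Xᵀ * A * X = Matrix.diagonal lam)
    (hmono_h : ∀ i j : Fin (k+1), i ≤ j → lam (Sum.inl j) ≤ lam (Sum.inl i))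
    (hmono_l : ∀ i j : Fin (m+1), i ≤ j → lam (Sum.inr j) ≤ lam (Sum.inr i))
    (hgap : lam (Sum.inr 0) < lam (Sum.inl (Fin.last k)))
    (hpos : ∀ i, 0 < lam i)
    (Y C : Matrix (Fin (k+1) ⊕ Fin (m+1)) (Fin (k+1)) ℝ)
    (hYB : Yᵀ * B * Y = 1)
    (hYC : Y = X * C)
    (hsmall : energy A B (X.submatrix id Sum.inl) - energy A B Y ≤
      (lam (Sum.inl (Fin.last k)) - lam (Sum.inr 0)) / (2 * ((k : ℝ) + 1))) :
    (⨆ α : {a : Fin (k+1) → ℝ // ∑ i, a i ^ 2 ≤ 1}, ⨅ β : Fin (k+1) → ℝ,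
        Real.sqrt (((X.submatrix id Sum.inl) *ᵥ (α : Fin (k+1) → ℝ) - Y *ᵥ β) ⬝ᵥ
          A *ᵥ ((X.submatrix id Sum.inl) *ᵥ (α : Fin (k+1) → ℝ) - Y *ᵥ β))) ≤
      Real.sqrt (2 * lam (Sum.inr 0) *
        (((k : ℝ) + 1) * (energy A B (X.submatrix id Sum.inl) - energy A B Y)) /
        (lam (Sum.inl (Fin.last k)) - lam (Sum.inr 0))) := by
  subst hYC
  set L := lam (Sum.inl (Fin.last k))
  set l := lam (Sum.inr 0)
  set t := ∑ b, ∑ j, C (Sum.inr b) j ^ 2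
  have hC : Cᵀ * C = 1 := transpose_mul_self_eq_one_of_mul hXB hYB
  have hN : (L - l) * t ≤
      ((k : ℝ) + 1) * (energy A B (X.submatrix id Sum.inl) - energy A B (X * C)) := by
    simpa using sub_mul_sum_sq_inr_le_energy_sub hXB hXA hC
      (fun a => hmono_h a _ (Fin.le_last a)) (fun b => hmono_l 0 b (Fin.zero_le b))
  have hgap' : 0 < L - l := sub_pos.2 hgap
  have ht : t ≤ 1 / 2 := by
    refine le_of_mul_le_mul_left ?_ hgap'
    calc (L - l) * t ≤ ((k : ℝ) + 1) * ((L - l) / (2 * ((k : ℝ) + 1))) :=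
          hN.trans (mul_le_mul_of_nonneg_left hsmall (by positivity))
      _ = (L - l) * (1 / 2) := by field_simp
  have ht0 : 0 ≤ t := Finset.sum_nonneg fun b _ => Finset.sum_nonneg fun j _ => sq_nonneg _
  have hl0 : 0 ≤ l := (hpos _).le
  have : Nonempty {a : Fin (k+1) → ℝ // ∑ i, a i ^ 2 ≤ 1} := ⟨⟨0, by simp⟩⟩
  refine ciSup_le fun ⟨α, hα⟩ => ?_
  obtain ⟨w, hw, hwα⟩ := exists_mulVec_inl_eq hC (by linarith) α
  have hw2 : ∑ j, w j ^ 2 ≤ 2 := by nlinarith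
  have hlow := sum_mul_sq_mulVec_inr_le C w (fun b => hmono_l 0 b (Fin.zero_le b)) hl0
  refine (ciInf_le ⟨0, ?_⟩ w).trans (Real.sqrt_le_sqrt ?_)
  · rintro _ ⟨β, rfl⟩
    exact Real.sqrt_nonneg _
  rw [dotProduct_mulVec_submatrix_inl_sub_mul_mulVec hXA hw, le_div_iff₀ hgap']
  nlinarith [mul_le_mul_of_nonneg_left hw2 (mul_nonneg hl0 ht0)]

/-- Theorem 4.4 (second bound): if `E(Xʰ) − E(Y) ≤ (λ_k − λ_{k+1})/(2k)` then
the Kolmogorov distance `d(Y, Xʰ) = sup_{‖α‖≤1} inf_β ‖Xʰα − Yβ‖_A` satisfies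
`d(Y, Xʰ) ≤ √(2 λ_{k+1} k(E(Xʰ) − E(Y))/(λ_k − λ_{k+1}))`.
The high block has size `k+1` and the low block size `m+1`. -/
theorem stmt_15 (k m : ℕ)
    (A B : Matrix (Fin (k+1) ⊕ Fin (m+1)) (Fin (k+1) ⊕ Fin (m+1)) ℝ)
    (hA : A.PosDef) (hB : B.PosDef)
    (lam : Fin (k+1) ⊕ Fin (m+1) → ℝ)
    (X : Matrix (Fin (k+1) ⊕ Fin (m+1)) (Fin (k+1) ⊕ Fin (m+1)) ℝ)
    (heig : A * X = B * X * Matrix.diagonal lam)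
    (hXB : Xᵀ * B * X = 1)
    (hXA : Xᵀ * A * X = Matrix.diagonal lam)
    (hmono_h : ∀ i j : Fin (k+1), i ≤ j → lam (Sum.inl j) ≤ lam (Sum.inl i))
    (hmono_l : ∀ i j : Fin (m+1), i ≤ j → lam (Sum.inr j) ≤ lam (Sum.inr i))
    (hgap : lam (Sum.inr 0) < lam (Sum.inl (Fin.last k)))
    (hpos : ∀ i, 0 < lam i)
    (Y C : Matrix (Fin (k+1) ⊕ Fin (m+1)) (Fin (k+1)) ℝ)
    (hYB : Yᵀ * B * Y = 1)
    (hYC : Y = X * C)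
    (hsmall : energy A B (X.submatrix id Sum.inl) - energy A B Y ≤
      (lam (Sum.inl (Fin.last k)) - lam (Sum.inr 0)) / (2 * ((k : ℝ) + 1))) :
    (⨆ α : {a : Fin (k+1) → ℝ // ∑ i, a i ^ 2 ≤ 1}, ⨅ β : Fin (k+1) → ℝ,
        Real.sqrt (((X.submatrix id Sum.inl) *ᵥ (α : Fin (k+1) → ℝ) - Y *ᵥ β) ⬝ᵥ
          A *ᵥ ((X.submatrix id Sum.inl) *ᵥ (α : Fin (k+1) → ℝ) - Y *ᵥ β))) ≤
      Real.sqrt (2 * lam (Sum.inr 0) *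
        (((k : ℝ) + 1) * (energy A B (X.submatrix id Sum.inl) - energy A B Y)) /
        (lam (Sum.inl (Fin.last k)) - lam (Sum.inr 0))) :=
  stmt_15_general k m A B lam X hXB hXA hmono_h hmono_l hgap hpos Y C hYB hYC hsmall
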